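/- Let U be a critical-point-free harmonic function on a domain Ω ⊆ ℝⁿ, α : (−δ, δ) → Ω an integral curve of ∇U/‖∇U‖, and H the mean curvature of the level sets of U (oriented by ∇U/‖∇U‖). Then the function s ↦ log‖∇U(α(s))‖ is differentiable with derivative (n−1)·H(α(s)). -/

import Mathlib

/-!
Along the gradient flow, `d/ds log ‖∇U(α s)‖ = ⟪ν, D²U ν⟫ / ‖∇U‖` with `ν = ∇U/‖∇U‖`. Completing
`ν` to an orthonormal basis by tangent vectors `bᵢ`, harmonicity says that the trace of the Hessian
vanishes, so `⟪ν, D²U ν⟫ = -∑ ⟪bᵢ, D²U bᵢ⟫`, which is `(n - 1) H ‖∇U‖` by definition of `H`.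
-/

open scoped InnerProductSpace

/-- The Hessian quadratic form of `f` at `p` evaluated at `(v, v)`
(the second directional derivative of `f` at `p` along `v`). -/
noncomputable def hessQF {n : ℕ} (f : EuclideanSpace ℝ (Fin n) → ℝ)
    (p v : EuclideanSpace ℝ (Fin n)) : ℝ :=
  ⟪fderiv ℝ (gradient f) p v, v⟫_ℝ

/-- The Laplacian of `f` at `p`. -/
noncomputable def lap {n : ℕ} (f : EuclideanSpace ℝ (Fin n) → ℝ)
    (p : EuclideanSpace ℝ (Fin n)) : ℝ :=
  ∑ i : Fin n,
    ⟪fderiv ℝ (gradient f) p (EuclideanSpace.single i 1), EuclideanSpace.single i (1:ℝ)⟫_ℝ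

open Module

section
variable {E : Type*} [NormedAddCommGroup E] [InnerProductSpace ℝ E]

theorem HasDerivAt.log_norm {g : ℝ → E} {g' : E} {s : ℝ} (hg : HasDerivAt g g' s)
    (h0 : g s ≠ 0) :
    HasDerivAt (fun τ => Real.log ‖g τ‖) (⟪g s, g'⟫_ℝ / ‖g s‖ ^ 2) s := by
  have hsq : (fun τ => Real.log ‖g τ‖) = fun τ => Real.log (‖g τ‖ ^ 2) / 2 := by
    funext τ
    rw [Real.log_pow]
    push_cast
    ring
  rw [hsq]
  exact ((hg.norm_sq.log (by positivity)).div_const 2).congr_deriv (by ring)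

theorem ContDiffAt.differentiableAt_gradient [CompleteSpace E] {f : E → ℝ} {p : E}
    (hf : ContDiffAt ℝ 2 f p) : DifferentiableAt ℝ (gradient f) p :=
  (InnerProductSpace.toDual ℝ E).symm.differentiableAt.comp p
    ((hf.fderiv_right le_rfl).differentiableAt one_ne_zero)

theorem exists_orthonormal_compl_trace_eq [FiniteDimensional ℝ E] {m : ℕ}
    (hm : finrank ℝ E = m + 1) {ν : E} (hν : ‖ν‖ = 1) :
    ∃ b : Fin m → E, Orthonormal ℝ b ∧ (∀ i, ⟪b i, ν⟫_ℝ = 0) ∧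
      ∀ A : E →ₗ[ℝ] E, LinearMap.trace ℝ E A = ⟪ν, A ν⟫_ℝ + ∑ i, ⟪b i, A (b i)⟫_ℝ := by
  have hν' : Orthonormal ℝ (({0} : Set (Fin (m + 1))).domRestrict fun _ => ν) :=
    ⟨fun _ => hν, fun i j hij => absurd (Subtype.ext (i.2.trans j.2.symm)) hij⟩
  obtain ⟨B, hB⟩ := hν'.exists_orthonormalBasis_extension_of_card_eq (by simpa using hm)
  have hB0 : B 0 = ν := hB 0 rfl
  refine ⟨fun i => B i.succ, B.orthonormal.comp _ (Fin.succ_injective _), fun i => ?_,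
    fun A => ?_⟩
  · rw [← hB0]
    exact B.orthonormal.2 (Fin.succ_ne_zero i)
  · rw [LinearMap.trace_eq_sum_inner A B, Fin.sum_univ_succ, hB0]

theorem hasDerivAt_log_norm_gradient_comp [CompleteSpace E] {U : E → ℝ} {α : ℝ → E} {s : ℝ}
    {ν : E} (hU : ContDiffAt ℝ 2 U (α s)) (hG : gradient U (α s) ≠ 0)
    (hν : ν = ‖gradient U (α s)‖⁻¹ • gradient U (α s)) (hα : HasDerivAt α ν s) :
    HasDerivAt (fun τ => Real.log ‖gradient U (α τ)‖)
      (⟪ν, fderiv ℝ (gradient U) (α s) ν⟫_ℝ / ‖gradient U (α s)‖) s := by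
  have hG' : ‖gradient U (α s)‖ ≠ 0 := norm_ne_zero_iff.2 hG
  have hGν : gradient U (α s) = ‖gradient U (α s)‖ • ν := by rw [hν, smul_inv_smul₀ hG']
  refine ((hU.differentiableAt_gradient.hasFDerivAt.comp_hasDerivAt s hα).log_norm hG).congr_deriv
    ?_
  simp only [Function.comp_apply]
  nth_rw 1 [hGν]
  rw [real_inner_smul_left]
  field_simp
end

theorem natCast_mul_sum_div_natCast {m : ℕ} (x : Fin m → ℝ) :
    (m : ℝ) * ((∑ i, x i) / m) = ∑ i, x i := by
  rcases m with _ | m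
  · simp
  · exact mul_div_cancel₀ _ (Nat.cast_ne_zero.2 m.succ_ne_zero)

theorem lap_eq_trace {n : ℕ} (f : EuclideanSpace ℝ (Fin n) → ℝ) (p : EuclideanSpace ℝ (Fin n)) :
    lap f p = LinearMap.trace ℝ _ (fderiv ℝ (gradient f) p).toLinearMap := by
  rw [LinearMap.trace_eq_sum_inner _ (EuclideanSpace.basisFun (Fin n) ℝ), lap]
  simp [EuclideanSpace.basisFun_apply, real_inner_comm]

theorem stmt8_general {n : ℕ}
    {Ω : Set (EuclideanSpace ℝ (Fin n))} (hΩ : IsOpen Ω)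
    (U : EuclideanSpace ℝ (Fin n) → ℝ) (hU : ContDiffOn ℝ 2 U Ω)
    (hgrad : ∀ p ∈ Ω, gradient U p ≠ 0)
    (hharm : ∀ p ∈ Ω, lap U p = 0)
    (N : EuclideanSpace ℝ (Fin n) → EuclideanSpace ℝ (Fin n))
    (hN : ∀ p ∈ Ω, N p = ‖gradient U p‖⁻¹ • gradient U p)
    (H : EuclideanSpace ℝ (Fin n) → ℝ)
    -- H(p) is the mean curvature of the level set {U = U(p)} at p: the average over
    -- unit tangent vectors v of −D²_v U(p)/‖∇U(p)‖
    (hH : ∀ p ∈ Ω, ∀ b : Fin (n - 1) → EuclideanSpace ℝ (Fin n),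
      Orthonormal ℝ b → (∀ i, ⟪b i, N p⟫_ℝ = 0) →
      H p = (∑ i, -(hessQF U p (b i)) / ‖gradient U p‖) / (n - 1))
    (δ : ℝ)
    (α : ℝ → EuclideanSpace ℝ (Fin n))
    (hα : ∀ s ∈ Set.Ioo (-δ) δ, α s ∈ Ω ∧ HasDerivAt α (N (α s)) s) :
    ∀ s ∈ Set.Ioo (-δ) δ,
      HasDerivAt (fun τ => Real.log ‖gradient U (α τ)‖) ((n - 1) * H (α s)) s := by
  intro s hs
  obtain ⟨hpΩ, hαs⟩ := hα s hs
  have hG := hgrad _ hpΩ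
  -- The real denominator `↑n - 1` in `hH` is the cardinality `n - 1` of the tangent frame
  -- only because `n ≠ 0`.
  have hn0 : n ≠ 0 := by
    rintro rfl
    exact hG (Subsingleton.elim _ _)
  have hν : ‖N (α s)‖ = 1 := hN _ hpΩ ▸ norm_smul_inv_norm hG
  obtain ⟨b, hb, hbν, htrace⟩ := exists_orthonormal_compl_trace_eq (m := n - 1)
    (by rw [finrank_euclideanSpace_fin]; omega) hν
  refine (hasDerivAt_log_norm_gradient_comp (hU.contDiffAt (hΩ.mem_nhds hpΩ)) hG
    (hN _ hpΩ) hαs).congr_deriv ?_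
  have htr := htrace (fderiv ℝ (gradient U) (α s))
  rw [← lap_eq_trace, hharm _ hpΩ, ContinuousLinearMap.coe_coe] at htr
  rw [hH _ hpΩ b hb hbν, ← Nat.cast_pred (Nat.pos_of_ne_zero hn0), natCast_mul_sum_div_natCast]
  simp only [hessQF, real_inner_comm (b _), neg_div, Finset.sum_neg_distrib, ← Finset.sum_div]
  rw [← neg_div, eq_neg_of_add_eq_zero_left htr.symm]

theorem stmt8 {n : ℕ} (hn : 2 ≤ n)
    {Ω : Set (EuclideanSpace ℝ (Fin n))} (hΩ : IsOpen Ω)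
    (U : EuclideanSpace ℝ (Fin n) → ℝ) (hU : ContDiffOn ℝ 2 U Ω)
    (hgrad : ∀ p ∈ Ω, gradient U p ≠ 0)
    (hharm : ∀ p ∈ Ω, lap U p = 0)
    (N : EuclideanSpace ℝ (Fin n) → EuclideanSpace ℝ (Fin n))
    (hN : ∀ p ∈ Ω, N p = ‖gradient U p‖⁻¹ • gradient U p)
    (H : EuclideanSpace ℝ (Fin n) → ℝ)
    -- H(p) is the mean curvature of the level set {U = U(p)} at p: the average over
    -- unit tangent vectors v of −D²_v U(p)/‖∇U(p)‖
    (hH : ∀ p ∈ Ω, ∀ b : Fin (n - 1) → EuclideanSpace ℝ (Fin n),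
      Orthonormal ℝ b → (∀ i, ⟪b i, N p⟫_ℝ = 0) →
      H p = (∑ i, -(hessQF U p (b i)) / ‖gradient U p‖) / (n - 1))
    (δ : ℝ) (hδ : 0 < δ)
    (α : ℝ → EuclideanSpace ℝ (Fin n))
    (hα : ∀ s ∈ Set.Ioo (-δ) δ, α s ∈ Ω ∧ HasDerivAt α (N (α s)) s) :
    ∀ s ∈ Set.Ioo (-δ) δ,
      HasDerivAt (fun τ => Real.log ‖gradient U (α τ)‖) ((n - 1) * H (α s)) s :=
  stmt8_general hΩ U hU hgrad hharm N hN H hH δ α hα
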